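/- Let P be a d-independent property of F. Then there is no real multivariate polynomial p in the variables indexed by D × R of total degree at most d such that p(δ_f) < 1/2 for every f ∈ F with P(f) = 0 and p(δ_f) > 1/2 for every f ∈ F with P(f) = 1. (By the polynomial method, this is the content of Theorem 1: any quantum query algorithm in the chosen-input model computing P with positive bias makes, after writing its acceptance probability as a polynomial of degree at most twice the number of queries, at least (d+1)/2 queries.) -/

import Mathlib

/-!
At the point `δ_f` every variable is `0` or `1`, so a monomial `∏ x_i ^ m_i` evaluates to the
indicator that `f` agrees with the partial function `m.support ⊆ D × R`. A monomial of degree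
at most `d` constrains at most `d` values of `f`, which by `d`-independence is independent of
`P f`. Hence the mean of `p(δ_f)` over `{P f = b}` equals its mean over all of `F`, for both
values of `b`; it cannot be `< 1/2` on one class and `> 1/2` on the other.
-/

open Finset MvPolynomial

lemma card_support_le_totalDegree {σ : Type*} {p : MvPolynomial σ ℝ} {m : σ →₀ ℕ}
    (hm : m ∈ p.support) : #m.support ≤ p.totalDegree := by
  classical
  rw [← Finsupp.toFinset_toMultiset, totalDegree_eq]
  exact (Multiset.toFinset_card_le _).trans
    (le_sup (f := fun m => Multiset.card (Finsupp.toMultiset m)) hm)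

lemma exists_surjective_fin_of_card_le {α : Type*} {S : Finset α} (hS : S.Nonempty) {d : ℕ}
    (hd : #S ≤ d) : ∃ g : Fin d → S, Function.Surjective g := by
  have : Nonempty S := hS.to_subtype
  exact ⟨_, Function.invFun_surjective ((Fin.castLEEmb hd).injective.comp S.equivFin.injective)⟩

variable {D R β : Type} [DecidableEq R]

def graphIndicator (f : D → R) (xy : D × R) : ℝ := if f xy.1 = xy.2 then 1 else 0

def IsIndependent [DecidableEq β] (F : Finset (D → R)) (P : (D → R) → β) (d : ℕ) : Prop :=
  ∀ (z : Fin d → D) (y : Fin d → R) (b : β),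
    #(F.filter (fun f => P f = b ∧ ∀ j, f (z j) = y j)) * #F =
      #(F.filter (fun f => ∀ j, f (z j) = y j)) * #(F.filter (fun f => P f = b))

lemma prod_graphIndicator_pow (f : D → R) (m : D × R →₀ ℕ) :
    ∏ i ∈ m.support, graphIndicator f i ^ m i = if ∀ i ∈ m.support, f i.1 = i.2 then 1 else 0 := by
  rw [← prod_boole]
  refine prod_congr rfl fun i hi => ?_
  have hmi : m i ≠ 0 := Finsupp.mem_support_iff.mp hi
  unfold graphIndicator
  split_ifs <;> simp [hmi]

lemma sum_eval_graphIndicator (A : Finset (D → R)) (p : MvPolynomial (D × R) ℝ) :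
    ∑ f ∈ A, eval (graphIndicator f) p =
      ∑ m ∈ p.support, p.coeff m * #(A.filter fun f => ∀ i ∈ m.support, f i.1 = i.2) := by
  simp only [eval_eq, prod_graphIndicator_pow]
  rw [sum_comm]
  refine sum_congr rfl fun m _ => ?_
  rw [← mul_sum, sum_boole]

namespace IsIndependent

variable [DecidableEq β] {F : Finset (D → R)} {P : (D → R) → β} {d : ℕ}

lemma card_filter_agree (hP : IsIndependent F P d) {S : Finset (D × R)} (hS : #S ≤ d) (b : β) :
    #(F.filter fun f => P f = b ∧ ∀ i ∈ S, f i.1 = i.2) * #F =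
      #(F.filter fun f => ∀ i ∈ S, f i.1 = i.2) * #(F.filter fun f => P f = b) := by
  rcases S.eq_empty_or_nonempty with rfl | hne
  · simp [mul_comm]
  obtain ⟨g, hg⟩ := exists_surjective_fin_of_card_le hne hS
  have agree_iff (f : D → R) : (∀ j, f (g j).1.1 = (g j).1.2) ↔ ∀ i ∈ S, f i.1 = i.2 :=
    (hg.forall (p := fun i : S => f i.1.1 = i.1.2)).symm.trans Subtype.forall
  simpa only [agree_iff] using hP (fun j => (g j).1.1) (fun j => (g j).1.2) b

lemma sum_filter_eval_mul_card (hP : IsIndependent F P d) {p : MvPolynomial (D × R) ℝ}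
    (hp : p.totalDegree ≤ d) (b : β) :
    (∑ f ∈ F.filter (fun f => P f = b), eval (graphIndicator f) p) * #F =
      #(F.filter fun f => P f = b) * ∑ f ∈ F, eval (graphIndicator f) p := by
  rw [sum_eval_graphIndicator, sum_eval_graphIndicator, sum_mul, mul_sum]
  refine sum_congr rfl fun m hm => ?_
  have key : (_ : ℝ) = _ := congrArg Nat.cast
    (hP.card_filter_agree ((card_support_le_totalDegree hm).trans hp) b)
  push_cast at key
  rw [filter_filter]
  linear_combination p.coeff m * key

end IsIndependent

theorem stmt1_general {D R : Type} [DecidableEq R]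
    (F : Finset (D → R))
    (P : (D → R) → Fin 2) (d : ℕ)
    (hP0 : (F.filter (fun f => P f = 0)).Nonempty)
    (hP1 : (F.filter (fun f => P f = 1)).Nonempty)
    (hInd : ∀ (z : Fin d → D) (y : Fin d → R) (b : Fin 2),
      (F.filter (fun f => P f = b ∧ ∀ j, f (z j) = y j)).card * F.card =
        (F.filter (fun f => ∀ j, f (z j) = y j)).card *
          (F.filter (fun f => P f = b)).card) :
    ¬ ∃ p : MvPolynomial (D × R) ℝ, p.totalDegree ≤ d ∧
      (∀ f ∈ F, P f = 0 →
        MvPolynomial.eval (fun xy => if f xy.1 = xy.2 then (1 : ℝ) else 0) p < 1 / 2) ∧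
      (∀ f ∈ F, P f = 1 →
        MvPolynomial.eval (fun xy => if f xy.1 = xy.2 then (1 : ℝ) else 0) p > 1 / 2) := by
  rintro ⟨p, hdeg, h0, h1⟩
  have hIndep : IsIndependent F P d := hInd
  have lt0 : ∑ f ∈ F.filter (fun f => P f = 0), eval (graphIndicator f) p <
      ∑ _f ∈ F.filter (fun f => P f = 0), (1 / 2 : ℝ) :=
    sum_lt_sum_of_nonempty hP0 fun f hf => h0 f (mem_filter.1 hf).1 (mem_filter.1 hf).2
  have gt1 : ∑ _f ∈ F.filter (fun f => P f = 1), (1 / 2 : ℝ) <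
      ∑ f ∈ F.filter (fun f => P f = 1), eval (graphIndicator f) p :=
    sum_lt_sum_of_nonempty hP1 fun f hf => h1 f (mem_filter.1 hf).1 (mem_filter.1 hf).2
  have mean0 := hIndep.sum_filter_eval_mul_card hdeg 0
  have mean1 := hIndep.sum_filter_eval_mul_card hdeg 1
  have hN : (0 : ℝ) < #F := by exact_mod_cast (hP0.mono (filter_subset _ F)).card_pos
  have hn0 : (0 : ℝ) < #(F.filter fun f => P f = 0) := by exact_mod_cast hP0.card_pos
  have hn1 : (0 : ℝ) < #(F.filter fun f => P f = 1) := by exact_mod_cast hP1.card_pos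
  simp only [sum_const, nsmul_eq_mul] at lt0 gt1
  nlinarith [mul_lt_mul_of_pos_right lt0 hN, mul_lt_mul_of_pos_right gt1 hN]

/-- For a `d`-independent property `P` of a nonempty finite family `F` of
functions `D → R` (with `P` attaining both values), there is no real multivariate
polynomial `p` in variables indexed by `D × R` of total degree at most `d` with
`p(δ_f) < 1/2` whenever `P f = 0` and `p(δ_f) > 1/2` whenever `P f = 1`. -/
theorem stmt1 {D R : Type} [Fintype D] [Fintype R] [DecidableEq D] [DecidableEq R]
    [Nonempty D] [Nonempty R]
    (F : Finset (D → R)) (hF : F.Nonempty)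
    (P : (D → R) → Fin 2) (d : ℕ)
    (hP0 : (F.filter (fun f => P f = 0)).Nonempty)
    (hP1 : (F.filter (fun f => P f = 1)).Nonempty)
    (hInd : ∀ (z : Fin d → D) (y : Fin d → R) (b : Fin 2),
      (F.filter (fun f => P f = b ∧ ∀ j, f (z j) = y j)).card * F.card =
        (F.filter (fun f => ∀ j, f (z j) = y j)).card *
          (F.filter (fun f => P f = b)).card) :
    ¬ ∃ p : MvPolynomial (D × R) ℝ, p.totalDegree ≤ d ∧
      (∀ f ∈ F, P f = 0 →
        MvPolynomial.eval (fun xy => if f xy.1 = xy.2 then (1 : ℝ) else 0) p < 1 / 2) ∧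
      (∀ f ∈ F, P f = 1 →
        MvPolynomial.eval (fun xy => if f xy.1 = xy.2 then (1 : ℝ) else 0) p > 1 / 2) :=
  stmt1_general F P d hP0 hP1 hInd
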